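/- Let H¹, …, Hʳ be n×n real matrices and K₀ an n×n real matrix with ‖Hⁱ − K₀‖_F > 0 for each i. Define the weights w_i = 1 / (2 ‖Hⁱ − K₀‖_F), and let K₁ be any matrix satisfying Σ_{i=1}^r w_i ‖Hⁱ − K₁‖_F² ≤ Σ_{i=1}^r w_i ‖Hⁱ − K₀‖_F² (for instance, the minimizer of the weighted objective). Then Σ_{i=1}^r ‖Hⁱ − K₁‖_F ≤ Σ_{i=1}^r ‖Hⁱ − K₀‖_F; i.e., the self-weighted update with w_i = 1/(2‖Hⁱ − K‖_F) does not increase the objective Σᵢ ‖Hⁱ − K‖_F. -/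

import Mathlib

open Matrix BigOperators

/-- The Frobenius norm `‖M‖_F = √(∑ᵢⱼ Mᵢⱼ²)` of a real matrix. -/
noncomputable def frobNorm {n : ℕ} (M : Matrix (Fin n) (Fin n) ℝ) : ℝ :=
  Real.sqrt (∑ i, ∑ j, (M i j) ^ 2)

/-!
For `b > 0` the quadratic `a ↦ a² / (2b) + b / 2` majorizes `a` and touches it at `a = b`.
With `bᵢ = ‖Hⁱ − K₀‖_F`, the weighted objective at `K` plus the constant `∑ᵢ bᵢ / 2` is therefore
an upper bound for `∑ᵢ ‖Hⁱ − K‖_F` that is exact at `K = K₀`, so decreasing it decreases the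
objective.
-/

theorem le_sq_div_two_mul_add_half {a b : ℝ} (hb : 0 < b) : a ≤ a ^ 2 / (2 * b) + b / 2 := by
  have gap : a ^ 2 / (2 * b) + b / 2 - a = (a - b) ^ 2 / (2 * b) := by
    field_simp
    ring
  linarith [div_nonneg (sq_nonneg (a - b)) (by positivity : (0 : ℝ) ≤ 2 * b)]

theorem sq_div_two_mul_self_add_half {b : ℝ} (hb : b ≠ 0) : b ^ 2 / (2 * b) + b / 2 = b := by
  field_simp
  ring

theorem Finset.sum_le_sum_of_sum_sq_div_two_mul_le {ι : Type*} (s : Finset ι) {a b : ι → ℝ}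
    (hb : ∀ i ∈ s, 0 < b i)
    (h : ∑ i ∈ s, a i ^ 2 / (2 * b i) ≤ ∑ i ∈ s, b i ^ 2 / (2 * b i)) :
    ∑ i ∈ s, a i ≤ ∑ i ∈ s, b i :=
  calc ∑ i ∈ s, a i
      ≤ ∑ i ∈ s, (a i ^ 2 / (2 * b i) + b i / 2) :=
        sum_le_sum fun i hi => le_sq_div_two_mul_add_half (hb i hi)
    _ = ∑ i ∈ s, a i ^ 2 / (2 * b i) + ∑ i ∈ s, b i / 2 := sum_add_distrib
    _ ≤ ∑ i ∈ s, b i ^ 2 / (2 * b i) + ∑ i ∈ s, b i / 2 := by gcongr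
    _ = ∑ i ∈ s, b i := by
        rw [← sum_add_distrib]
        exact sum_congr rfl fun i hi => sq_div_two_mul_self_add_half (hb i hi).ne'

/-- With weights `wᵢ = 1/(2‖Hⁱ − K₀‖_F)`, if `K₁` satisfies
`∑ᵢ wᵢ ‖Hⁱ − K₁‖_F² ≤ ∑ᵢ wᵢ ‖Hⁱ − K₀‖_F²` (e.g. the minimizer of the weighted objective),
then `∑ᵢ ‖Hⁱ − K₁‖_F ≤ ∑ᵢ ‖Hⁱ − K₀‖_F`: the self-weighted update does not increase the
objective `∑ᵢ ‖Hⁱ − K‖_F`. -/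
theorem self_weighted_update_decreases_objective
    (n r : ℕ) (H : Fin r → Matrix (Fin n) (Fin n) ℝ)
    (K₀ K₁ : Matrix (Fin n) (Fin n) ℝ)
    (hpos : ∀ i, 0 < frobNorm (H i - K₀))
    (w : Fin r → ℝ) (hw : ∀ i, w i = 1 / (2 * frobNorm (H i - K₀)))
    (hdec : ∑ i, w i * (frobNorm (H i - K₁)) ^ 2 ≤ ∑ i, w i * (frobNorm (H i - K₀)) ^ 2) :
    ∑ i, frobNorm (H i - K₁) ≤ ∑ i, frobNorm (H i - K₀) := by
  simp only [hw, one_div_mul_eq_div] at hdec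
  exact Finset.sum_le_sum_of_sum_sq_div_two_mul_le _ (fun i _ => hpos i) hdec
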